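/- Let $\rho > \max\{0,-\alpha\}$, $0 < \gamma < \sigma \le 1$, $(\nu_n)$ positive decreasing with $V_n = \sum_{j\le n}\nu_j$, $V(\infty) = \infty$, $\beta \le \nu_1/2$, $U(x) = \int_0^x\mu(t)dt$ with $\mu$ positive continuous, $\delta \in \{-1,1\}$. Then for every $x > 0$: $\omega_{\delta}(\sigma, x) > k(\sigma)\bigl(1 - \theta_{\delta}(\sigma,x)\bigr)$, where $\omega_{\delta}(\sigma,x) = \sum_{n\ge1} \operatorname{csch}(\rho U^{\delta\gamma}(x)(V_n-\beta)^{\gamma}) e^{-\alpha U^{\delta\gamma}(x)(V_n-\beta)^{\gamma}} \frac{U^{\delta\sigma}(x)\nu_{n+1}}{(V_n-\beta)^{1-\sigma}}$, $k(\sigma) = \int_0^{\infty}\operatorname{csch}(\rho u^{\gamma})e^{-\alpha u^{\gamma}}u^{\sigma-1}du$, and $\theta_{\delta}(\sigma,x) = \frac{1}{k(\sigma)}\int_0^{U^{\delta}(x)(\nu_1 - \beta)}\operatorname{csch}(\rho u^{\gamma})e^{-\alpha u^{\gamma}}u^{\sigma-1}du \in (0,1)$. -/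

import Mathlib

/-- The hyperbolic cosecant function. -/
noncomputable def csch (u : ℝ) : ℝ := 2 / (Real.exp u - Real.exp (-u))

/-!
Put `c = U(x)^δ` and `a n = c (V (n + 1) - β)`. The `n`-th term of the series is
`F (a n) * (a (n + 1) - a n)`, where `F u = csch (ρ u^γ) e^{-α u^γ} u^{σ-1}` is the integrand
of `k`, so the series is a left Riemann sum of `F` over `[a 0, ∞)`. Because `ρ > max 0 (-α)`
and `σ ≤ 1`, `F` is positive and strictly decreasing on `(0, ∞)`, and `γ < σ` makes it
integrable there; hence the sum strictly exceeds `∫_{a 0}^∞ F = k (1 - θ)`. The steps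
`c ν (n + 2)` decrease, so each term is bounded by the preceding piece of the integral, which
makes the series converge.
-/

open Real MeasureTheory Set Filter

lemma csch_eq_inv_sinh (u : ℝ) : csch u = (sinh u)⁻¹ := by
  rw [csch, sinh_eq, inv_div]

lemma csch_le_of_pos {t : ℝ} (ht : 0 < t) : csch t ≤ (2 + t⁻¹) * exp (-t) := by
  have hE : exp (-t) * exp t = 1 := by rw [← exp_add, neg_add_cancel, exp_zero]
  have h2t : 1 + 2 * t ≤ exp t * exp t := by rw [← exp_add]; linarith [add_one_le_exp (t + t)]
  have hD : 0 < exp t - exp (-t) := sub_pos.2 (exp_lt_exp.2 (by linarith))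
  rw [csch, div_le_iff₀ hD, mul_assoc, mul_sub, hE,
    show 2 + t⁻¹ = (2 * t + 1) / t by field_simp, div_mul_eq_mul_div, le_div_iff₀ ht]
  nlinarith [mul_le_mul_of_nonneg_right h2t (mul_self_nonneg (exp (-t)))]

lemma sinh_mul_mul_exp_mul (ρ α w : ℝ) :
    sinh (ρ * w) * exp (α * w) = (exp ((ρ + α) * w) - exp ((α - ρ) * w)) / 2 := by
  rw [sinh_eq, div_mul_eq_mul_div, sub_mul, ← exp_add, ← exp_add]
  ring_nf

lemma strictMonoOn_sinh_mul_mul_exp_mul {ρ α : ℝ} (hρ : 0 < ρ) (hρα : 0 < ρ + α) :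
    StrictMonoOn (fun w => sinh (ρ * w) * exp (α * w)) (Ici 0) := by
  intro w hw w' hw' hww'
  rcases le_or_gt 0 α with hα | hα
  · have hs : sinh (ρ * w) < sinh (ρ * w') := sinh_strictMono (by nlinarith)
    have he : exp (α * w) ≤ exp (α * w') := exp_le_exp.2 (by nlinarith)
    have hs0 : 0 ≤ sinh (ρ * w') := sinh_nonneg_iff.2 (mul_nonneg hρ.le (hw.trans hww'.le))
    exact mul_lt_mul hs he (exp_pos _) hs0
  · simp only [sinh_mul_mul_exp_mul]
    have h1 : exp ((ρ + α) * w) < exp ((ρ + α) * w') := exp_lt_exp.2 (by nlinarith)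
    have h2 : exp ((α - ρ) * w') ≤ exp ((α - ρ) * w) := exp_le_exp.2 (by nlinarith)
    linarith

noncomputable def cschKernel (α ρ γ σ u : ℝ) : ℝ :=
  csch (ρ * u ^ γ) / exp (α * u ^ γ) * u ^ (σ - 1)

section
variable {α ρ γ σ : ℝ}

lemma cschKernel_eq (u : ℝ) :
    cschKernel α ρ γ σ u = u ^ (σ - 1) / (sinh (ρ * u ^ γ) * exp (α * u ^ γ)) := by
  rw [cschKernel, csch_eq_inv_sinh, div_mul_eq_mul_div, inv_mul_eq_div, div_div]

lemma cschKernel_pos (hρ : 0 < ρ) {u : ℝ} (hu : 0 < u) : 0 < cschKernel α ρ γ σ u := by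
  have : 0 < sinh (ρ * u ^ γ) := sinh_pos_iff.2 (mul_pos hρ (rpow_pos_of_pos hu γ))
  rw [cschKernel_eq]
  positivity

lemma cschKernel_strictAntiOn (hρ : 0 < ρ) (hρα : 0 < ρ + α) (hγ : 0 < γ) (hσ : σ ≤ 1) :
    StrictAntiOn (cschKernel α ρ γ σ) (Ioi 0) := by
  intro u hu v _ huv
  have hu' : (0 : ℝ) < u := hu
  have hw : 0 < u ^ γ := rpow_pos_of_pos hu' γ
  simp only [cschKernel_eq]
  refine div_lt_div₀' (rpow_le_rpow_of_nonpos hu' huv.le (by linarith)) ?_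
    (rpow_pos_of_pos hu' _) (mul_pos (sinh_pos_iff.2 (mul_pos hρ hw)) (exp_pos _))
  exact strictMonoOn_sinh_mul_mul_exp_mul hρ hρα (mem_Ici.2 hw.le)
    (mem_Ici.2 (rpow_nonneg (hu'.trans huv).le γ)) (rpow_lt_rpow hu'.le huv hγ)

lemma cschKernel_le (hρ : 0 < ρ) {u : ℝ} (hu : 0 < u) :
    cschKernel α ρ γ σ u ≤ 2 * (u ^ (σ - 1) * exp (-(ρ + α) * u ^ γ))
      + ρ⁻¹ * (u ^ (σ - 1 - γ) * exp (-(ρ + α) * u ^ γ)) := by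
  have hw : 0 < u ^ γ := rpow_pos_of_pos hu γ
  have hexp : exp (-(ρ + α) * u ^ γ) = exp (-(ρ * u ^ γ)) / exp (α * u ^ γ) := by
    rw [← exp_sub]; ring_nf
  calc cschKernel α ρ γ σ u
      ≤ (2 + (ρ * u ^ γ)⁻¹) * exp (-(ρ * u ^ γ)) / exp (α * u ^ γ) * u ^ (σ - 1) := by
        unfold cschKernel
        gcongr
        exact csch_le_of_pos (mul_pos hρ hw)
    _ = _ := by
        rw [hexp, rpow_sub hu (σ - 1) γ]
        ring

lemma cschKernel_integrableOn (hρ : 0 < ρ) (hρα : 0 < ρ + α) (hγ : 0 < γ)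
    (hγσ : γ < σ) : IntegrableOn (cschKernel α ρ γ σ) (Ioi 0) := by
  have hbound : IntegrableOn (fun u => 2 * (u ^ (σ - 1) * exp (-(ρ + α) * u ^ γ))
      + ρ⁻¹ * (u ^ (σ - 1 - γ) * exp (-(ρ + α) * u ^ γ))) (Ioi 0) :=
    ((integrableOn_rpow_mul_exp_neg_mul_rpow (by linarith) hγ hρα).const_mul 2).add
      ((integrableOn_rpow_mul_exp_neg_mul_rpow (by linarith) hγ hρα).const_mul ρ⁻¹)
  have hmeas : Measurable (cschKernel α ρ γ σ) := by
    unfold cschKernel csch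
    fun_prop
  refine hbound.mono' hmeas.aestronglyMeasurable.restrict
    ((ae_restrict_iff' measurableSet_Ioi).2 (Eventually.of_forall fun u hu => ?_))
  rw [Real.norm_of_nonneg (cschKernel_pos hρ hu).le]
  exact cschKernel_le hρ hu

end

section LeftRiemannSum
variable {f : ℝ → ℝ}

lemma AntitoneOn.intervalIntegrable_of_Icc {a b : ℝ} (hf : AntitoneOn f (Icc a b))
    (hab : a ≤ b) : IntervalIntegrable f volume a b :=
  AntitoneOn.intervalIntegrable (by rwa [uIcc_of_le hab])

lemma intervalIntegral_le_mul_sub_of_antitoneOn {a b : ℝ} (hf : AntitoneOn f (Icc a b))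
    (hab : a ≤ b) : ∫ u in a..b, f u ≤ f a * (b - a) := by
  have hint : IntervalIntegrable f volume a b := hf.intervalIntegrable_of_Icc hab
  calc ∫ u in a..b, f u ≤ ∫ _ in a..b, f a :=
        intervalIntegral.integral_mono_on hab hint intervalIntegrable_const
          fun u hu => hf (left_mem_Icc.2 hab) hu hu.1
    _ = f a * (b - a) := by rw [intervalIntegral.integral_const, smul_eq_mul, mul_comm]

lemma mul_sub_le_intervalIntegral_of_antitoneOn {a b : ℝ} (hf : AntitoneOn f (Icc a b))
    (hab : a ≤ b) : f b * (b - a) ≤ ∫ u in a..b, f u := by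
  have hint : IntervalIntegrable f volume a b := hf.intervalIntegrable_of_Icc hab
  calc f b * (b - a) = ∫ _ in a..b, f b := by
        rw [intervalIntegral.integral_const, smul_eq_mul, mul_comm]
    _ ≤ ∫ u in a..b, f u :=
        intervalIntegral.integral_mono_on hab intervalIntegrable_const hint
          fun u hu => hf hu (right_mem_Icc.2 hab) hu.2

lemma intervalIntegral_lt_mul_sub_of_strictAntiOn {a b : ℝ} (hf : StrictAntiOn f (Icc a b))
    (hab : a < b) : ∫ u in a..b, f u < f a * (b - a) := by
  set m := (a + b) / 2
  have ham : a < m := by simp only [m]; linarith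
  have hmb : m < b := by simp only [m]; linarith
  have hleft := intervalIntegral_le_mul_sub_of_antitoneOn
    (hf.antitoneOn.mono (Icc_subset_Icc_right hmb.le)) ham.le
  have hright := intervalIntegral_le_mul_sub_of_antitoneOn
    (hf.antitoneOn.mono (Icc_subset_Icc_left ham.le)) hmb.le
  have hfm : f m < f a := hf (left_mem_Icc.2 hab.le) ⟨ham.le, hmb.le⟩ ham
  rw [← intervalIntegral.integral_add_adjacent_intervals
    ((hf.antitoneOn.mono (Icc_subset_Icc_right hmb.le)).intervalIntegrable_of_Icc ham.le)
    ((hf.antitoneOn.mono (Icc_subset_Icc_left ham.le)).intervalIntegrable_of_Icc hmb.le)]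
  linarith [mul_lt_mul_of_pos_right hfm (sub_pos.2 hmb)]

theorem integral_Ioi_lt_tsum_mul_of_strictAntiOn {a g : ℕ → ℝ}
    (hf : StrictAntiOn f (Ici (a 0))) (hf0 : ∀ u ∈ Ici (a 0), 0 ≤ f u)
    (hint : IntegrableOn f (Ioi (a 0)))
    (hstep : ∀ n, a (n + 1) = a n + g n) (hg : ∀ n, 0 < g n) (hg_anti : Antitone g)
    (htop : Tendsto a atTop atTop) :
    ∫ u in Ioi (a 0), f u < ∑' n, f (a n) * g n := by
  have ha : StrictMono a := strictMono_nat_of_lt_succ fun n => by linarith [hstep n, hg n]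
  have hsub : ∀ n, Icc (a n) (a (n + 1)) ⊆ Ici (a 0) := fun n u hu =>
    (ha.monotone n.zero_le).trans hu.1
  have hfa : ∀ n, 0 ≤ f (a n) := fun n => hf0 _ (ha.monotone n.zero_le)
  have hgap : ∀ n, a (n + 1) - a n = g n := fun n => by rw [hstep]; ring
  set I : ℕ → ℝ := fun n => ∫ u in a n..a (n + 1), f u
  have hI_le : ∀ n, I n ≤ f (a n) * g n := fun n => hgap n ▸
    intervalIntegral_le_mul_sub_of_antitoneOn (hf.antitoneOn.mono (hsub n)) (ha n.lt_succ_self).le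
  have hI_lt : I 0 < f (a 0) * g 0 := hgap 0 ▸
    intervalIntegral_lt_mul_sub_of_strictAntiOn (hf.mono (hsub 0)) (ha Nat.zero_lt_one)
  have hI_ge : ∀ n, f (a (n + 1)) * g n ≤ I n := fun n => hgap n ▸
    mul_sub_le_intervalIntegral_of_antitoneOn (hf.antitoneOn.mono (hsub n)) (ha n.lt_succ_self).le
  have hI_nonneg : ∀ n, 0 ≤ I n := fun n => (mul_nonneg (hfa _) (hg n).le).trans (hI_ge n)
  have hI : HasSum I (∫ u in Ioi (a 0), f u) := by
    refine (hasSum_iff_tendsto_nat_of_nonneg hI_nonneg _).2 ?_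
    refine (intervalIntegral_tendsto_integral_Ioi (a 0) hint htop).congr fun n => ?_
    exact (intervalIntegral.sum_integral_adjacent_intervals fun k _ =>
      (hf.antitoneOn.mono (hsub k)).intervalIntegrable_of_Icc (ha k.lt_succ_self).le).symm
  have hsum : Summable fun n => f (a n) * g n := by
    refine (summable_nat_add_iff 1).1 (hI.summable.of_nonneg_of_le (fun n => ?_) fun n => ?_)
    · exact mul_nonneg (hfa _) (hg _).le
    · exact (mul_le_mul_of_nonneg_left (hg_anti n.le_succ) (hfa _)).trans (hI_ge n)
  exact hasSum_lt hI_le hI_lt hI hsum.hasSum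

end LeftRiemannSum

lemma le_sum_Icc_one {ν : ℕ → ℝ} (hν : ∀ n ≥ 1, 0 < ν n) {n : ℕ} (hn : 1 ≤ n) :
    ν 1 ≤ ∑ j ∈ Finset.Icc 1 n, ν j :=
  Finset.single_le_sum (fun j hj => (hν j (Finset.mem_Icc.1 hj).1).le)
    (Finset.mem_Icc.2 ⟨le_rfl, hn⟩)

lemma setIntegral_pos_of_forall_pos {f : ℝ → ℝ} {s : Set ℝ} (hs : MeasurableSet s)
    (hvol : 0 < volume s) (hpos : ∀ u ∈ s, 0 < f u) (hint : IntegrableOn f s) :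
    0 < ∫ u in s, f u := by
  rw [setIntegral_pos_iff_support_of_nonneg_ae
    (ae_restrict_of_forall_mem hs fun u hu => (hpos u hu).le) hint]
  exact hvol.trans_le (measure_mono fun u hu => ⟨(hpos u hu).ne', hu⟩)

lemma mul_one_sub_div_eq_integral_Ioi {f : ℝ → ℝ} (hpos : ∀ u > 0, 0 < f u)
    (hint : IntegrableOn f (Ioi 0)) {b k θ : ℝ} (hb : 0 < b) (hk : k = ∫ u in Ioi 0, f u)
    (hθ : θ = 1 / k * ∫ u in Ioc 0 b, f u) :
    k * (1 - θ) = ∫ u in Ioi b, f u ∧ 0 < θ ∧ θ < 1 := by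
  set A := ∫ u in Ioc 0 b, f u
  set J := ∫ u in Ioi b, f u
  have hkAJ : k = A + J := by
    rw [hk, ← intervalIntegral.integral_interval_add_Ioi hint
      (hint.mono_set (Ioi_subset_Ioi hb.le)), intervalIntegral.integral_of_le hb.le]
  have hA : 0 < A := setIntegral_pos_of_forall_pos measurableSet_Ioc (by simpa using hb)
    (fun u hu => hpos u hu.1) (hint.mono_set Ioc_subset_Ioi_self)
  have hJ : 0 < J := setIntegral_pos_of_forall_pos measurableSet_Ioi (by simp)
    (fun u hu => hpos u (hb.trans hu)) (hint.mono_set (Ioi_subset_Ioi hb.le))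
  have hk0 : 0 < k := by linarith
  rw [hθ, one_div, inv_mul_eq_div]
  refine ⟨by field_simp; linarith, by positivity, (div_lt_one hk0).2 (by linarith)⟩

lemma cschKernel_rpow_mul_mul {α ρ γ σ U δ t d : ℝ} (hU : 0 < U) (ht : 0 < t) :
    cschKernel α ρ γ σ (U ^ δ * t) * (U ^ δ * d) =
      csch (ρ * U ^ (δ * γ) * t ^ γ) / exp (α * U ^ (δ * γ) * t ^ γ) *
        (U ^ (δ * σ) * d / t ^ (1 - σ)) := by
  have hc : 0 < U ^ δ := rpow_pos_of_pos hU δ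
  have hγ : (U ^ δ * t) ^ γ = U ^ (δ * γ) * t ^ γ := by
    rw [mul_rpow hc.le ht.le, ← rpow_mul hU.le]
  have hσ : (U ^ δ * t) ^ (σ - 1) * U ^ δ = U ^ (δ * σ) / t ^ (1 - σ) := by
    rw [mul_rpow hc.le ht.le, mul_right_comm, ← rpow_add_one hc.ne', sub_add_cancel,
      ← rpow_mul hU.le, show σ - 1 = -(1 - σ) by ring, rpow_neg ht.le, div_eq_mul_inv]
  rw [cschKernel, hγ, ← mul_assoc ρ, ← mul_assoc α, mul_div_right_comm, ← hσ]
  ring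

theorem stmt14_general (α ρ γ σ β δ : ℝ)
    (hρ : ρ > max 0 (-α)) (hγ : 0 < γ) (hγσ : γ < σ) (hσ : σ ≤ 1)
    (ν : ℕ → ℝ) (hν : ∀ n ≥ 1, 0 < ν n)
    (hdec : ∀ m n, 1 ≤ m → m ≤ n → ν n ≤ ν m)
    (V : ℕ → ℝ) (hV : ∀ n, V n = ∑ j ∈ Finset.Icc 1 n, ν j)
    (hVinf : Filter.Tendsto V Filter.atTop Filter.atTop)
    (hβ : β ≤ ν 1 / 2)
    (μ : ℝ → ℝ) (hμ : ∀ t > 0, 0 < μ t)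
    (hμint : ∀ x > 0, MeasureTheory.IntegrableOn μ (Set.Ioc 0 x))
    (U : ℝ → ℝ) (hU : ∀ x, U x = ∫ t in Set.Ioc (0 : ℝ) x, μ t)
    (x : ℝ) (hx : 0 < x)
    (k θ : ℝ)
    (hk : k = ∫ u in Set.Ioi (0 : ℝ), csch (ρ * u ^ γ) / Real.exp (α * u ^ γ) * u ^ (σ - 1))
    (hθ : θ = (1 / k) * ∫ u in Set.Ioc (0 : ℝ) (U x ^ δ * (ν 1 - β)),
        csch (ρ * u ^ γ) / Real.exp (α * u ^ γ) * u ^ (σ - 1)) :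
    (∑' n : ℕ,
        csch (ρ * U x ^ (δ * γ) * (V (n + 1) - β) ^ γ) /
            Real.exp (α * U x ^ (δ * γ) * (V (n + 1) - β) ^ γ) *
          (U x ^ (δ * σ) * ν (n + 2) / (V (n + 1) - β) ^ (1 - σ))) > k * (1 - θ) ∧
    0 < θ ∧ θ < 1 := by
  obtain ⟨hρ0, hρα⟩ := max_lt_iff.mp hρ
  have hρα' : 0 < ρ + α := by linarith
  have hUx : 0 < U x := hU x ▸ setIntegral_pos_of_forall_pos measurableSet_Ioc
    (by simpa using hx) (fun t ht => hμ t ht.1) (hμint x hx)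
  have hc : 0 < U x ^ δ := rpow_pos_of_pos hUx δ
  have hVβ : ∀ n, 0 < V (n + 1) - β := fun n => by
    rw [hV]; linarith [le_sum_Icc_one hν (Nat.le_add_left 1 n), hν 1 le_rfl]
  set a : ℕ → ℝ := fun n => U x ^ δ * (V (n + 1) - β)
  have ha0 : 0 < a 0 := mul_pos hc (hVβ 0)
  have hKpos : ∀ u > 0, 0 < cschKernel α ρ γ σ u := fun u hu => cschKernel_pos hρ0 hu
  have hKint := cschKernel_integrableOn hρ0 hρα' hγ hγσ
  rw [show ν 1 = V 1 by simp [hV]] at hθ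
  obtain ⟨hkθ, hθ0, hθ1⟩ := mul_one_sub_div_eq_integral_Ioi hKpos hKint ha0 hk hθ
  refine ⟨?_, hθ0, hθ1⟩
  rw [hkθ, ← tsum_congr fun n => cschKernel_rpow_mul_mul hUx (hVβ n)]
  have hstep : ∀ n, a (n + 1) = a n + U x ^ δ * ν (n + 2) := fun n => by
    simp only [a, hV, Finset.sum_Icc_succ_top (Nat.le_add_left 1 (n + 1))]
    ring
  have hstep_anti : Antitone fun n => U x ^ δ * ν (n + 2) := antitone_nat_of_succ_le fun n =>
    mul_le_mul_of_nonneg_left (hdec _ _ (by omega) (by omega)) hc.le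
  have htop : Tendsto a atTop atTop := Tendsto.const_mul_atTop hc
    (tendsto_atTop_add_const_right _ (-β) (hVinf.comp (tendsto_add_atTop_nat 1)))
  have hIci : Ici (a 0) ⊆ Ioi 0 := Ici_subset_Ioi.2 ha0
  exact integral_Ioi_lt_tsum_mul_of_strictAntiOn
    ((cschKernel_strictAntiOn hρ0 hρα' hγ hσ).mono hIci) (fun u hu => (hKpos u (hIci hu)).le)
    (hKint.mono_set (Ioi_subset_Ioi ha0.le)) hstep (fun n => mul_pos hc (hν _ (by omega)))
    hstep_anti htop

theorem stmt14 (α ρ γ σ β δ : ℝ)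
    (hρ : ρ > max 0 (-α)) (hγ : 0 < γ) (hγσ : γ < σ) (hσ : σ ≤ 1)
    (hδ : δ = 1 ∨ δ = -1)
    (ν : ℕ → ℝ) (hν : ∀ n ≥ 1, 0 < ν n)
    (hdec : ∀ m n, 1 ≤ m → m ≤ n → ν n ≤ ν m)
    (V : ℕ → ℝ) (hV : ∀ n, V n = ∑ j ∈ Finset.Icc 1 n, ν j)
    (hVinf : Filter.Tendsto V Filter.atTop Filter.atTop)
    (hβ : β ≤ ν 1 / 2)
    (μ : ℝ → ℝ) (hμ : ∀ t > 0, 0 < μ t) (hμc : ContinuousOn μ (Set.Ioi 0))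
    (hμint : ∀ x > 0, MeasureTheory.IntegrableOn μ (Set.Ioc 0 x))
    (U : ℝ → ℝ) (hU : ∀ x, U x = ∫ t in Set.Ioc (0 : ℝ) x, μ t)
    (x : ℝ) (hx : 0 < x)
    (k θ : ℝ)
    (hk : k = ∫ u in Set.Ioi (0 : ℝ), csch (ρ * u ^ γ) / Real.exp (α * u ^ γ) * u ^ (σ - 1))
    (hθ : θ = (1 / k) * ∫ u in Set.Ioc (0 : ℝ) (U x ^ δ * (ν 1 - β)),
        csch (ρ * u ^ γ) / Real.exp (α * u ^ γ) * u ^ (σ - 1)) :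
    (∑' n : ℕ,
        csch (ρ * U x ^ (δ * γ) * (V (n + 1) - β) ^ γ) /
            Real.exp (α * U x ^ (δ * γ) * (V (n + 1) - β) ^ γ) *
          (U x ^ (δ * σ) * ν (n + 2) / (V (n + 1) - β) ^ (1 - σ))) > k * (1 - θ) ∧
    0 < θ ∧ θ < 1 :=
  stmt14_general α ρ γ σ β δ hρ hγ hγσ hσ ν hν hdec V hV hVinf hβ μ hμ hμint U hU x hx k θ hk hθ
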